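/- arXiv:2108.00514 — 2 statements merged into one kernel-verified Lean document; each statement's English description precedes it below -/
import Mathlib

section
/- Let G be a chemical reaction network with complexes C ⊂ ℤ_{≥0}^d, reactions R ⊂ C × C, and rate constants κ_{a,b} > 0, with Hamiltonian H(x,p) = ∑_{(a,b)∈R} κ_{a,b} x^a (e^{⟨b−a, p⟩} − 1). Let c ∈ ℝ_{>0}^d satisfy the complex-balance condition: for every z ∈ C, ∑_{a:(a,z)∈R} κ_{a,z} c^a = ∑_{b:(z,b)∈R} κ_{z,b} c^z. Then V(x) = ∑_{i=1}^d (x_i log(x_i/c_i) − x_i + c_i) satisfies H(x, ∇V(x)) = 0 for all x ∈ ℝ_{>0}^d. -/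
open Finset

/-- CRN Hamiltonian: reactions indexed by `ι`, each with source complex `src i`,
target complex `tgt i`, and rate constant `κ i`. -/
noncomputable def crnH {d : ℕ} {ι : Type*} [Fintype ι]
    (src tgt : ι → Fin d → ℕ) (κ : ι → ℝ) (x p : Fin d → ℝ) : ℝ :=
  ∑ i, κ i * (∏ j, x j ^ src i j) *
    (Real.exp (∑ j, ((tgt i j : ℝ) - (src i j : ℝ)) * p j) - 1)

/-!
With `y = x / c`, the momentum `p = log y` turns `e^{⟨b - a, p⟩}` into `y^b / y^a`, and
`x^a = c^a y^a`, so the reaction `a → b` contributes `κ_{a,b} c^a (y^b - y^a)` to `H`.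
Grouping these contributions by complex `z`, the coefficient of `y^z` is the inflow minus the
outflow of `z` at `c`, which vanishes by complex balance.
-/

section Regrouping

variable {ι α R : Type*} [Fintype ι] [DecidableEq α]

theorem sum_mul_comp_eq_sum_fiber [NonUnitalNonAssocSemiring R] {s : Finset α} (g : ι → α)
    (hg : ∀ i, g i ∈ s) (w : ι → R) (φ : α → R) :
    ∑ i, w i * φ (g i) = ∑ z ∈ s, (∑ i ∈ univ.filter (fun i => g i = z), w i) * φ z := by
  rw [← sum_fiberwise_of_maps_to (fun i _ => hg i)]
  refine sum_congr rfl fun z _ => ?_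
  rw [sum_mul]
  exact sum_congr rfl fun i hi => by rw [(mem_filter.1 hi).2]

theorem sum_mul_sub_eq_zero_of_balanced [NonUnitalNonAssocRing R] (src tgt : ι → α)
    (w : ι → R) (φ : α → R)
    (hbal : ∀ z, ∑ i ∈ univ.filter (fun i => tgt i = z), w i =
      ∑ i ∈ univ.filter (fun i => src i = z), w i) :
    ∑ i, w i * (φ (tgt i) - φ (src i)) = 0 := by
  set s := univ.image tgt ∪ univ.image src
  simp only [mul_sub, sum_sub_distrib]
  rw [sum_mul_comp_eq_sum_fiber (s := s) tgt (fun i => by simp [s]) w φ,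
    sum_mul_comp_eq_sum_fiber (s := s) src (fun i => by simp [s]) w φ]
  simp only [hbal, sub_self]

end Regrouping

theorem exp_sum_sub_mul_log {κ : Type*} [Fintype κ] (a b : κ → ℕ) {y : κ → ℝ}
    (hy : ∀ j, 0 < y j) :
    Real.exp (∑ j, ((b j : ℝ) - a j) * Real.log (y j)) = (∏ j, y j ^ b j) / ∏ j, y j ^ a j := by
  rw [Real.exp_sum, ← prod_div_distrib]
  exact prod_congr rfl fun j _ => by
    simp only [sub_mul, Real.exp_sub, Real.exp_nat_mul, Real.exp_log (hy j)]

theorem prod_pow_eq_prod_pow_mul_prod_div_pow {κ : Type*} [Fintype κ] (a : κ → ℕ)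
    (x : κ → ℝ) {c : κ → ℝ} (hc : ∀ j, c j ≠ 0) :
    ∏ j, x j ^ a j = (∏ j, c j ^ a j) * ∏ j, (x j / c j) ^ a j := by
  rw [← prod_mul_distrib]
  exact prod_congr rfl fun j _ => by rw [← mul_pow, mul_div_cancel₀ _ (hc j)]

theorem crnH_log_div {d : ℕ} {ι : Type*} [Fintype ι] (src tgt : ι → Fin d → ℕ) (κ : ι → ℝ)
    {x c : Fin d → ℝ} (hx : ∀ j, 0 < x j) (hc : ∀ j, 0 < c j) :
    crnH src tgt κ x (fun j => Real.log (x j / c j)) =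
      ∑ i, κ i * (∏ j, c j ^ src i j) *
        ((∏ j, (x j / c j) ^ tgt i j) - ∏ j, (x j / c j) ^ src i j) := by
  have hy : ∀ j, 0 < x j / c j := fun j => div_pos (hx j) (hc j)
  refine sum_congr rfl fun i _ => ?_
  have hpos : 0 < ∏ j, (x j / c j) ^ src i j := prod_pos fun j _ => pow_pos (hy j) _
  rw [exp_sum_sub_mul_log _ _ hy,
    prod_pow_eq_prod_pow_mul_prod_div_pow _ x fun j => (hc j).ne']
  field_simp

theorem complex_balanced_implies_hjb_general
    {d : ℕ} {ι : Type*} [Fintype ι] [DecidableEq (Fin d → ℕ)]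
    (src tgt : ι → Fin d → ℕ) (κ : ι → ℝ)
    (c : Fin d → ℝ) (hc : ∀ j, 0 < c j)
    (hbal : ∀ z : Fin d → ℕ,
      ∑ i ∈ univ.filter (fun i => tgt i = z), κ i * ∏ j, c j ^ src i j =
      ∑ i ∈ univ.filter (fun i => src i = z), κ i * ∏ j, c j ^ z j) :
    ∀ x : Fin d → ℝ, (∀ j, 0 < x j) →
      crnH src tgt κ x (fun j => Real.log (x j / c j)) = 0 := by
  intro x hx
  rw [crnH_log_div src tgt κ hx hc]
  refine sum_mul_sub_eq_zero_of_balanced src tgt (fun i => κ i * ∏ j, c j ^ src i j)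
    (fun z => ∏ j, (x j / c j) ^ z j) fun z => ?_
  rw [hbal z]
  exact sum_congr rfl fun i hi => by rw [(mem_filter.1 hi).2]

theorem complex_balanced_implies_hjb
    {d : ℕ} {ι : Type*} [Fintype ι] [DecidableEq (Fin d → ℕ)]
    (src tgt : ι → Fin d → ℕ) (κ : ι → ℝ) (hκ : ∀ i, 0 < κ i)
    (c : Fin d → ℝ) (hc : ∀ j, 0 < c j)
    (hbal : ∀ z : Fin d → ℕ,
      ∑ i ∈ univ.filter (fun i => tgt i = z), κ i * ∏ j, c j ^ src i j =
      ∑ i ∈ univ.filter (fun i => src i = z), κ i * ∏ j, c j ^ z j) :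
    ∀ x : Fin d → ℝ, (∀ j, 0 < x j) →
      crnH src tgt κ x (fun j => Real.log (x j / c j)) = 0 :=
  complex_balanced_implies_hjb_general src tgt κ c hc hbal
end

section
/- The Legendre transform of p ↦ x(e^{−p} − 1) + (e^p − 1) recovers the large-deviations local rate: for x > 0 and β ∈ ℝ, sup_{p∈ℝ} { pβ − x(e^{−p}−1) − (e^p−1) } = inf { x·ℓ(u/x) + ℓ(v) : u, v ≥ 0, v − u = β }, where ℓ(z) = z log z − z + 1, and both sides are finite. -/
noncomputable def ell (z : ℝ) : ℝ := z * Real.log z - z + 1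

/-!
The Hamiltonian splits as `x · ℓ*(-p) + ℓ*(p)`, where `ℓ*(p) = eᵖ - 1` is the convex conjugate
of `ℓ` on `[0, ∞)`. Fenchel–Young for `ℓ`, applied to `v` with slope `p` and to `u / x` with
slope `-p`, bounds every value of the Legendre transform by every admissible cost (weak duality).
Equality holds in both applications at `v = eᵖ`, `u = x e⁻ᵖ`, and this pair is admissible exactly
when `eᵖ - x e⁻ᵖ = β`, an equation that always has a solution `p = log s`, with `s` the positive
root of `s² - β s - x`. The common value is then both the supremum and the infimum.
-/

open Real

theorem isLUB_and_isGLB_of_forall_le {α : Type*} [Preorder α] {A B : Set α} {M : α}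
    (hAB : ∀ a ∈ A, ∀ b ∈ B, a ≤ b) (hMA : M ∈ A) (hMB : M ∈ B) :
    IsLUB A M ∧ IsGLB B M :=
  ⟨IsGreatest.isLUB ⟨hMA, fun a ha => hAB a ha M hMB⟩,
    IsLeast.isGLB ⟨hMB, fun b hb => hAB M hMA b hb⟩⟩

theorem mul_sub_log_add_one_le_exp {z : ℝ} (hz : 0 ≤ z) (p : ℝ) :
    z * (p - log z + 1) ≤ exp p := by
  rcases hz.eq_or_lt with rfl | hz
  · simpa using (exp_pos p).le
  · calc z * (p - log z + 1) ≤ z * exp (p - log z) :=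
          mul_le_mul_of_nonneg_left (by linarith [add_one_le_exp (p - log z)]) hz.le
      _ = exp p := by rw [exp_sub, exp_log hz, mul_div_cancel₀ _ hz.ne']

theorem mul_sub_exp_sub_one_le_ell {z : ℝ} (hz : 0 ≤ z) (p : ℝ) :
    p * z - (exp p - 1) ≤ ell z := by
  have := mul_sub_log_add_one_le_exp hz p
  unfold ell
  linarith

theorem ell_exp (p : ℝ) : ell (exp p) = p * exp p - (exp p - 1) := by
  rw [ell, log_exp]
  ring

theorem exists_exp_sub_mul_exp_neg_eq {x : ℝ} (hx : 0 < x) (β : ℝ) :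
    ∃ p, exp p - x * exp (-p) = β := by
  set s := (β + √(β ^ 2 + 4 * x)) / 2 with hs_def
  have hsq : √(β ^ 2 + 4 * x) ^ 2 = β ^ 2 + 4 * x := sq_sqrt (by positivity)
  have hβ : |β| < √(β ^ 2 + 4 * x) := by
    rw [← sqrt_sq_eq_abs]
    exact sqrt_lt_sqrt (sq_nonneg β) (by linarith)
  have hs : 0 < s := by linarith [neg_abs_le β]
  have hroot : s ^ 2 - x = s * β := by rw [hs_def]; linear_combination hsq / 4
  refine ⟨log s, ?_⟩
  rw [exp_neg, exp_log hs]
  field_simp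
  exact hroot

theorem legendre_le_local_rate {x β u v : ℝ} (hx : 0 < x) (hu : 0 ≤ u) (hv : 0 ≤ v)
    (huv : v - u = β) (p : ℝ) :
    p * β - x * (exp (-p) - 1) - (exp p - 1) ≤ x * ell (u / x) + ell v := by
  have hdeath := mul_le_mul_of_nonneg_left
    (mul_sub_exp_sub_one_le_ell (div_nonneg hu hx.le) (-p)) hx.le
  have hbirth := mul_sub_exp_sub_one_le_ell hv p
  have hscale : x * (-p * (u / x)) = -p * u := by field_simp
  rw [← huv]
  linear_combination hdeath + hbirth - hscale

theorem legendre_transform_local_rate (x β : ℝ) (hx : 0 < x) :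
    ∃ M : ℝ,
      IsLUB {w : ℝ | ∃ p : ℝ,
          w = p * β - x * (Real.exp (-p) - 1) - (Real.exp p - 1)} M ∧
      IsGLB {w : ℝ | ∃ u v : ℝ, 0 ≤ u ∧ 0 ≤ v ∧ v - u = β ∧
          w = x * ell (u / x) + ell v} M := by
  obtain ⟨p₀, hp₀⟩ := exists_exp_sub_mul_exp_neg_eq hx β
  have hoptimal : p₀ * β - x * (exp (-p₀) - 1) - (exp p₀ - 1) =
      x * ell (x * exp (-p₀) / x) + ell (exp p₀) := by
    rw [mul_div_cancel_left₀ _ hx.ne', ell_exp, ell_exp, ← hp₀]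
    ring
  refine ⟨_, isLUB_and_isGLB_of_forall_le ?_ ⟨p₀, rfl⟩
    ⟨x * exp (-p₀), exp p₀, by positivity, by positivity, hp₀, hoptimal⟩⟩
  rintro _ ⟨p, rfl⟩ _ ⟨u, v, hu, hv, huv, rfl⟩
  exact legendre_le_local_rate hx hu hv huv p
end
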